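/- Let $X$ be a Banach space, and let $u, u_0, u_1, \ldots, u_j$ be elements of a normed space $V$ of $X$-valued functions. Let $\mathrm{Int}, Q_0, \ldots, Q_j : V \to X$ be linear with $Q_{-1} = 0$, $\Delta Q_\ell = Q_\ell - Q_{\ell-1}$. Suppose (i) $\|\mathrm{Int}\, u - Q_j u\|_X \le C 2^{-j}$, and (ii) $\|(\mathrm{Int} - Q_\ell)(u - u_{\ell'})\|_X \le C 2^{-(\ell + \ell')}$ for all $0 \le \ell, \ell' \le j$ (with the convention that (ii) also holds for $\ell - 1$ in place of $\ell$, $Q_{-1} = 0$ meaning $\|\mathrm{Int}(u - u_{\ell'})\| \le C 2^{-\ell'+1}$). Then $\big\|\mathrm{Int}\, u - \sum_{\ell=0}^j \Delta Q_\ell\, u_{j-\ell}\big\|_X \le 3C (j+2) 2^{-j}$. -/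

import Mathlib

/-! The multilevel sum telescopes to `Q_j`, so its error is `(Int - Q_j) u` plus
`∑_ℓ ΔQ_ℓ (u - u_{j-ℓ})`. Writing `ΔQ_ℓ = (Int - Q_{ℓ-1}) - (Int - Q_ℓ)`, each of the `j + 1`
summands is at most `C 2^{-j} + 2 C 2^{-j}`, because the two levels `ℓ` and `j - ℓ` add up to `j`. -/

open Finset

def levelDiff {M : Type*} [AddCommGroup M] (Q : ℕ → M) (ℓ : ℕ) : M :=
  Q ℓ - if ℓ = 0 then 0 else Q (ℓ - 1)

theorem sum_range_levelDiff {M : Type*} [AddCommGroup M] (Q : ℕ → M) (n : ℕ) :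
    ∑ ℓ ∈ range (n + 1), levelDiff Q ℓ = Q n := by
  simp only [sum_range_succ', levelDiff, Nat.add_one_ne_zero, if_false, if_true,
    Nat.add_sub_cancel, sum_range_sub, sub_zero, sub_add_cancel]

section LevelErrors

variable {R V X : Type*} [Semiring R] [AddCommGroup V] [Module R V]
  [SeminormedAddCommGroup X] [Module R X]
  (I : V →ₗ[R] X) (Q : ℕ → V →ₗ[R] X) (v : ℕ → V) {j : ℕ} {C : ℝ}

theorem norm_sub_prevLevel_apply_le
    (h2 : ∀ ℓ ℓ' : ℕ, ℓ ≤ j → ℓ' ≤ j → ‖I (v ℓ') - Q ℓ (v ℓ')‖ ≤ C * (1 / 2) ^ (ℓ + ℓ'))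
    (h3 : ∀ ℓ' : ℕ, ℓ' ≤ j → ‖I (v ℓ')‖ ≤ C * 2 * (1 / 2) ^ ℓ')
    {ℓ ℓ' : ℕ} (hℓ : ℓ ≤ j) (hℓ' : ℓ' ≤ j) :
    ‖I (v ℓ') - (if ℓ = 0 then 0 else Q (ℓ - 1)) (v ℓ')‖ ≤ C * 2 * (1 / 2) ^ (ℓ + ℓ') := by
  cases ℓ with
  | zero => simpa using h3 ℓ' hℓ'
  | succ k =>
    calc ‖I (v ℓ') - Q k (v ℓ')‖ ≤ C * (1 / 2) ^ (k + ℓ') := h2 _ _ (by omega) hℓ'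
      _ = C * 2 * (1 / 2) ^ (k + 1 + ℓ') := by
        rw [Nat.add_right_comm, pow_succ]
        ring

theorem norm_levelDiff_apply_le
    (h2 : ∀ ℓ ℓ' : ℕ, ℓ ≤ j → ℓ' ≤ j → ‖I (v ℓ') - Q ℓ (v ℓ')‖ ≤ C * (1 / 2) ^ (ℓ + ℓ'))
    (h3 : ∀ ℓ' : ℕ, ℓ' ≤ j → ‖I (v ℓ')‖ ≤ C * 2 * (1 / 2) ^ ℓ')
    {ℓ ℓ' : ℕ} (hℓ : ℓ ≤ j) (hℓ' : ℓ' ≤ j) :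
    ‖levelDiff Q ℓ (v ℓ')‖ ≤ 3 * C * (1 / 2) ^ (ℓ + ℓ') := by
  set w := v ℓ'
  calc ‖levelDiff Q ℓ w‖
      ≤ ‖Q ℓ w - I w‖ + ‖I w - (if ℓ = 0 then 0 else Q (ℓ - 1)) w‖ :=
        norm_sub_le_norm_sub_add_norm_sub _ _ _
    _ ≤ C * (1 / 2) ^ (ℓ + ℓ') + C * 2 * (1 / 2) ^ (ℓ + ℓ') := by
        rw [norm_sub_rev]
        exact add_le_add (h2 ℓ ℓ' hℓ hℓ') (norm_sub_prevLevel_apply_le I Q v h2 h3 hℓ hℓ')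
    _ = 3 * C * (1 / 2) ^ (ℓ + ℓ') := by ring

end LevelErrors

theorem multilevel_quadrature_error_general
    {V X : Type*} [AddCommGroup V] [Module ℝ V]
    [NormedAddCommGroup X] [NormedSpace ℝ X]
    (j : ℕ) (Int : V →ₗ[ℝ] X) (Q : ℕ → V →ₗ[ℝ] X)
    (ΔQ : ℕ → V →ₗ[ℝ] X)
    (hΔQ : ∀ ℓ, ΔQ ℓ = Q ℓ - (if ℓ = 0 then 0 else Q (ℓ - 1)))
    (u : V) (uh : ℕ → V) (C : ℝ)
    (h1 : ‖Int u - Q j u‖ ≤ C * (1 / 2) ^ j)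
    (h2 : ∀ ℓ ℓ' : ℕ, ℓ ≤ j → ℓ' ≤ j →
      ‖Int (u - uh ℓ') - Q ℓ (u - uh ℓ')‖ ≤ C * (1 / 2) ^ (ℓ + ℓ'))
    (h3 : ∀ ℓ' : ℕ, ℓ' ≤ j → ‖Int (u - uh ℓ')‖ ≤ C * 2 * (1 / 2) ^ ℓ') :
    ‖Int u - ∑ ℓ ∈ Finset.range (j + 1), ΔQ ℓ (uh (j - ℓ))‖
      ≤ 3 * C * (j + 2) * (1 / 2) ^ j := by
  obtain rfl : ΔQ = levelDiff Q := funext hΔQ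
  have hsplit : Int u - ∑ ℓ ∈ range (j + 1), levelDiff Q ℓ (uh (j - ℓ))
      = (Int u - Q j u) + ∑ ℓ ∈ range (j + 1), levelDiff Q ℓ (u - uh (j - ℓ)) := by
    have htele : ∑ ℓ ∈ range (j + 1), levelDiff Q ℓ u = Q j u := by
      rw [← LinearMap.sum_apply, sum_range_levelDiff]
    simp only [map_sub, sum_sub_distrib, htele]
    abel
  have hterm : ∀ ℓ ∈ range (j + 1),
      ‖levelDiff Q ℓ (u - uh (j - ℓ))‖ ≤ 3 * C * (1 / 2) ^ j := fun ℓ hℓ => by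
    have hℓj : ℓ ≤ j := Nat.lt_succ_iff.mp (mem_range.mp hℓ)
    simpa only [Nat.add_sub_cancel' hℓj] using
      norm_levelDiff_apply_le Int Q (fun ℓ' => u - uh ℓ') h2 h3 hℓj (Nat.sub_le j ℓ)
  have hCr : 0 ≤ C * (1 / 2) ^ j := (norm_nonneg _).trans h1
  rw [hsplit]
  calc _ ≤ ‖Int u - Q j u‖ + ∑ ℓ ∈ range (j + 1), ‖levelDiff Q ℓ (u - uh (j - ℓ))‖ :=
        (norm_add_le _ _).trans (by gcongr; exact norm_sum_le _ _)
    _ ≤ C * (1 / 2) ^ j + (j + 1) * (3 * C * (1 / 2) ^ j) := by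
        gcongr
        simpa using sum_le_sum hterm
    _ ≤ 3 * C * (j + 2) * (1 / 2) ^ j := by linear_combination 2 * hCr

/-- Abstract multilevel quadrature error estimate: if `‖Int u - Q_j u‖ ≤ C 2^{-j}` and
`‖(Int - Q_ℓ)(u - u_{ℓ'})‖ ≤ C 2^{-(ℓ+ℓ')}` for `0 ≤ ℓ, ℓ' ≤ j` (with the convention
`Q_{-1} = 0`, i.e. `‖Int (u - u_{ℓ'})‖ ≤ 2 C 2^{-ℓ'}`), then
`‖Int u - ∑_{ℓ=0}^j ΔQ_ℓ u_{j-ℓ}‖ ≤ 3 C (j+2) 2^{-j}`. -/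
theorem multilevel_quadrature_error
    {V X : Type*} [AddCommGroup V] [Module ℝ V]
    [NormedAddCommGroup X] [NormedSpace ℝ X] [CompleteSpace X]
    (j : ℕ) (Int : V →ₗ[ℝ] X) (Q : ℕ → V →ₗ[ℝ] X)
    (ΔQ : ℕ → V →ₗ[ℝ] X)
    (hΔQ : ∀ ℓ, ΔQ ℓ = Q ℓ - (if ℓ = 0 then 0 else Q (ℓ - 1)))
    (u : V) (uh : ℕ → V) (C : ℝ) (hC : 0 ≤ C)
    (h1 : ‖Int u - Q j u‖ ≤ C * (1 / 2) ^ j)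
    (h2 : ∀ ℓ ℓ' : ℕ, ℓ ≤ j → ℓ' ≤ j →
      ‖Int (u - uh ℓ') - Q ℓ (u - uh ℓ')‖ ≤ C * (1 / 2) ^ (ℓ + ℓ'))
    (h3 : ∀ ℓ' : ℕ, ℓ' ≤ j → ‖Int (u - uh ℓ')‖ ≤ C * 2 * (1 / 2) ^ ℓ') :
    ‖Int u - ∑ ℓ ∈ Finset.range (j + 1), ΔQ ℓ (uh (j - ℓ))‖
      ≤ 3 * C * (j + 2) * (1 / 2) ^ j :=
  multilevel_quadrature_error_general j Int Q ΔQ hΔQ u uh C h1 h2 h3
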